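/- Let 0 < D < 1, F ⊆ {0,…,N−1}, ũ_F ∈ {0,1}^{|F|}, ȳ ∈ {0,1}^N and r ∈ [0,1]^N. Define the successive cancellation encoder output ū = g(ũ_F, ȳ, r) ∈ {0,1}^N recursively by: u_i = ũ_i if i ∈ F, and otherwise u_i = 0 if r_i < l_i/(1+l_i) and u_i = 1 if r_i ≥ l_i/(1+l_i), where l_i = W^{(i)}(ȳ, u₀^{i−1}|0)/W^{(i)}(ȳ, u₀^{i−1}|1). Let ȳ' ∈ {0,1}^N, z̄ = (ȳ ⊕ ȳ')H_n^{−1}, ũ'_F = ũ_F ⊕ z̄_F, and r'_i = r_i if z_i = 0, r'_i = 1 − r_i if z_i = 1. If, with ū = g(ũ_F, ȳ, r), for every i ∈ F^c one has r_i ≠ l_i(ȳ, u₀^{i−1})/(1 + l_i(ȳ, u₀^{i−1})), then g(ũ'_F, ȳ', r') = g(ũ_F, ȳ, r) ⊕ z̄. -/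

import Mathlib

open Finset

noncomputable section

/-- The polarization kernel `G₂ = [[1,0],[1,1]]` over GF(2). -/
def G2 : Matrix (Fin 2) (Fin 2) (ZMod 2) := !![1, 0; 1, 1]

/-- Index identification `Fin 2 × Fin (2^n) ≃ Fin (2^(n+1))`. -/
def finPowEquiv (n : ℕ) : Fin 2 × Fin (2 ^ n) ≃ Fin (2 ^ (n + 1)) :=
  finProdFinEquiv.trans (finCongr (by rw [pow_succ]; ring))

/-- The `n`-fold Kronecker power `G₂^{⊗n}` over GF(2). -/
def kronPow : (n : ℕ) → Matrix (Fin (2 ^ n)) (Fin (2 ^ n)) (ZMod 2)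
  | 0 => 1
  | n + 1 => Matrix.reindex (finPowEquiv n) (finPowEquiv n)
      (Matrix.kroneckerMap (· * ·) G2 (kronPow n))

/-- Reversal of the `n`-bit binary expansion of `i`. -/
def bitRevNat (n i : ℕ) : ℕ :=
  ∑ k ∈ Finset.range n, if Nat.testBit i (n - 1 - k) then 2 ^ k else 0

lemma sum_range_two_pow_lt (n : ℕ) : ∑ k ∈ Finset.range n, 2 ^ k < 2 ^ n := by
  induction n with
  | zero => simp
  | succ m ih => rw [Finset.sum_range_succ, pow_succ]; omega

lemma bitRevNat_lt (n i : ℕ) : bitRevNat n i < 2 ^ n := by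
  have h1 : bitRevNat n i ≤ ∑ k ∈ Finset.range n, 2 ^ k :=
    Finset.sum_le_sum (fun k _ => by split <;> simp)
  have h2 := sum_range_two_pow_lt n
  omega

/-- The bit-reversal permutation matrix `Aₙ`. -/
def bitRevMatrix (n : ℕ) : Matrix (Fin (2 ^ n)) (Fin (2 ^ n)) (ZMod 2) :=
  fun i j => if (j : ℕ) = bitRevNat n (i : ℕ) then 1 else 0

/-- The polar transform matrix `Hₙ = Aₙ G₂^{⊗n}`. -/
def polarH (n : ℕ) : Matrix (Fin (2 ^ n)) (Fin (2 ^ n)) (ZMod 2) :=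
  bitRevMatrix n * kronPow n

/-- BSC(D) transition probability `W(y∣x)`. -/
def bsc (D : ℝ) (y x : ZMod 2) : ℝ := if y = x then 1 - D else D

/-- The polar transform `x̄ = ū Hₙ` of a word `ū`. -/
def polarEnc (n : ℕ) (u : Fin (2 ^ n) → ZMod 2) : Fin (2 ^ n) → ZMod 2 :=
  Matrix.vecMul u (polarH n)

/-- `W^{(i)}(ȳ, u₀^{i−1} ∣ u_i)`; it depends on `u` only through coordinates `≤ i`,
the coordinates `> i` being summed out. -/
def Wi (D : ℝ) (n : ℕ) (y : Fin (2 ^ n) → ZMod 2) (i : Fin (2 ^ n))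
    (u : Fin (2 ^ n) → ZMod 2) : ℝ :=
  ((2 : ℝ) ^ (2 ^ n - 1))⁻¹ *
    ∑ v ∈ Finset.univ.filter (fun v : Fin (2 ^ n) → ZMod 2 => ∀ j, j ≤ i → v j = u j),
      ∏ j, bsc D (y j) (polarEnc n v j)

/-- The posterior `P(u_i ∣ u₀^{i−1}, ȳ)`. -/
def post (D : ℝ) (n : ℕ) (y : Fin (2 ^ n) → ZMod 2) (i : Fin (2 ^ n))
    (u : Fin (2 ^ n) → ZMod 2) : ℝ :=
  Wi D n y i u /
    (Wi D n y i (Function.update u i 0) + Wi D n y i (Function.update u i 1))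

/-- The likelihood ratio `l_i(ȳ, u₀^{i−1}) = W^{(i)}(ȳ,u₀^{i−1}∣0)/W^{(i)}(ȳ,u₀^{i−1}∣1)`;
only the coordinates `< i` of `u` matter. -/
def likelihood (D : ℝ) (n : ℕ) (y : Fin (2 ^ n) → ZMod 2) (i : Fin (2 ^ n))
    (u : Fin (2 ^ n) → ZMod 2) : ℝ :=
  Wi D n y i (Function.update u i 0) / Wi D n y i (Function.update u i 1)

/-- First `k` steps of the successive cancellation encoder with randomized rounding:
coordinates `< k` are decided (frozen coordinates take the value `ut`, the others are `0`
iff `r i < l_i/(1+l_i)`), coordinates `≥ k` are still `0`. -/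
def scEncAux (D : ℝ) (n : ℕ) (F : Finset (Fin (2 ^ n))) (ut y : Fin (2 ^ n) → ZMod 2)
    (r : Fin (2 ^ n) → ℝ) : ℕ → Fin (2 ^ n) → ZMod 2
  | 0 => fun _ => 0
  | k + 1 => fun i =>
      if (i : ℕ) = k then
        if i ∈ F then ut i
        else if r i < likelihood D n y i (scEncAux D n F ut y r k) /
            (1 + likelihood D n y i (scEncAux D n F ut y r k)) then 0 else 1
      else scEncAux D n F ut y r k i

/-- The successive cancellation encoder output `ū = g(ũ_F, ȳ, r̄)`. -/
def scEnc (D : ℝ) (n : ℕ) (F : Finset (Fin (2 ^ n))) (ut y : Fin (2 ^ n) → ZMod 2)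
    (r : Fin (2 ^ n) → ℝ) : Fin (2 ^ n) → ZMod 2 :=
  scEncAux D n F ut y r (2 ^ n)

/-! Adding the codeword `z Hₙ` to the channel output and `z` to the input word leaves every
`W^{(i)}` unchanged: the shift is a bijection of the summation range and preserves each BSC factor.
So at a free position with `z_i = 1` the likelihood ratio is inverted, and since
`l⁻¹/(1+l⁻¹) = 1 - l/(1+l)`, rounding `1 - r_i` yields the opposite bit unless `r_i` lies on the
threshold. Induction over the positions then shows that the coupled encoder makes the original
decisions flipped by `z`. -/

theorem Nat.testBit_sum_two_pow (s : Finset ℕ) (j : ℕ) :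
    (∑ i ∈ s, 2 ^ i).testBit j ↔ j ∈ s := by
  rw [← Nat.mem_bitIndices, ← List.mem_toFinset, Finset.toFinset_bitIndices_sum_two_pow]

theorem bitRevNat_testBit (n i k : ℕ) :
    (bitRevNat n i).testBit k ↔ k < n ∧ i.testBit (n - 1 - k) := by
  rw [bitRevNat, ← Finset.sum_filter, Nat.testBit_sum_two_pow, Finset.mem_filter,
    Finset.mem_range]

theorem bitRevNat_bitRevNat {n i : ℕ} (hi : i < 2 ^ n) : bitRevNat n (bitRevNat n i) = i := by
  refine Nat.eq_of_testBit_eq fun k => Bool.eq_iff_iff.2 ?_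
  simp only [bitRevNat_testBit]
  by_cases hk : k < n
  · grind
  · simp [hk, Nat.testBit_lt_two_pow (hi.trans_le (Nat.pow_le_pow_right two_pos (not_lt.1 hk)))]

def bitRevPerm (n : ℕ) : Equiv.Perm (Fin (2 ^ n)) :=
  Function.Involutive.toPerm (fun i => ⟨bitRevNat n i, bitRevNat_lt n i⟩)
    fun i => Fin.ext (bitRevNat_bitRevNat i.isLt)

theorem bitRevMatrix_eq_permMatrix (n : ℕ) :
    bitRevMatrix n = (bitRevPerm n).permMatrix (ZMod 2) := by
  ext i j
  simp only [bitRevMatrix, PEquiv.toMatrix_apply, Equiv.toPEquiv_apply, Option.mem_def,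
    Option.some.injEq, Fin.ext_iff, eq_comm]
  rfl

theorem det_kronPow (n : ℕ) : (kronPow n).det = 1 := by
  induction n with
  | zero => simp [kronPow]
  | succ m ih => simp [kronPow, Matrix.det_kronecker, ih, G2, Matrix.det_fin_two_of]

theorem isUnit_det_polarH (n : ℕ) : IsUnit (polarH n).det := by
  rw [polarH, Matrix.det_mul, det_kronPow, mul_one, bitRevMatrix_eq_permMatrix,
    Matrix.det_permutation]
  exact (Equiv.Perm.sign _).isUnit.map (Int.castRingHom _)

theorem bsc_pos {D : ℝ} (hD0 : 0 < D) (hD1 : D < 1) (y x : ZMod 2) : 0 < bsc D y x := by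
  unfold bsc; split <;> linarith

theorem bsc_add_add (D : ℝ) (y x c : ZMod 2) : bsc D (y + c) (x + c) = bsc D y x := by
  simp only [bsc, add_left_inj]

theorem polarEnc_add (n : ℕ) (u v : Fin (2 ^ n) → ZMod 2) :
    polarEnc n (u + v) = polarEnc n u + polarEnc n v :=
  Matrix.add_vecMul (polarH n) u v

theorem Wi_pos {D : ℝ} (hD0 : 0 < D) (hD1 : D < 1) (n : ℕ) (y : Fin (2 ^ n) → ZMod 2)
    (i : Fin (2 ^ n)) (u : Fin (2 ^ n) → ZMod 2) : 0 < Wi D n y i u := by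
  refine mul_pos (by positivity) (Finset.sum_pos (fun v _ => ?_) ⟨u, by simp⟩)
  exact Finset.prod_pos fun j _ => bsc_pos hD0 hD1 _ _

theorem Wi_congr (D : ℝ) (n : ℕ) (y : Fin (2 ^ n) → ZMod 2) (i : Fin (2 ^ n))
    {u w : Fin (2 ^ n) → ZMod 2} (h : ∀ j ≤ i, u j = w j) :
    Wi D n y i u = Wi D n y i w := by
  unfold Wi
  congr 3 with v
  exact forall₂_congr fun j hj => by rw [h j hj]

theorem Wi_add_polarEnc (D : ℝ) (n : ℕ) (y z : Fin (2 ^ n) → ZMod 2) (i : Fin (2 ^ n))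
    (u : Fin (2 ^ n) → ZMod 2) : Wi D n (y + polarEnc n z) i (u + z) = Wi D n y i u := by
  unfold Wi
  congr 1
  refine (Finset.sum_equiv (Equiv.addRight z) (fun v => ?_) (fun v _ => ?_)).symm
  · simp
  · simp [polarEnc_add, bsc_add_add]

theorem likelihood_pos {D : ℝ} (hD0 : 0 < D) (hD1 : D < 1) (n : ℕ) (y : Fin (2 ^ n) → ZMod 2)
    (i : Fin (2 ^ n)) (u : Fin (2 ^ n) → ZMod 2) : 0 < likelihood D n y i u :=
  div_pos (Wi_pos hD0 hD1 n y i _) (Wi_pos hD0 hD1 n y i _)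

theorem likelihood_congr (D : ℝ) (n : ℕ) (y : Fin (2 ^ n) → ZMod 2) (i : Fin (2 ^ n))
    {u w : Fin (2 ^ n) → ZMod 2} (h : ∀ j < i, u j = w j) :
    likelihood D n y i u = likelihood D n y i w := by
  have hupd (a : ZMod 2) (j : Fin (2 ^ n)) (hj : j ≤ i) :
      Function.update u i a j = Function.update w i a j := by
    rcases hj.lt_or_eq with hj | rfl
    · simp [hj.ne, h j hj]
    · simp
  rw [likelihood, likelihood, Wi_congr D n y i (hupd 0), Wi_congr D n y i (hupd 1)]

theorem likelihood_add_polarEnc (D : ℝ) (n : ℕ) (y z : Fin (2 ^ n) → ZMod 2) (i : Fin (2 ^ n))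
    (u : Fin (2 ^ n) → ZMod 2) :
    likelihood D n (y + polarEnc n z) i (u + z) =
      if z i = 0 then likelihood D n y i u else (likelihood D n y i u)⁻¹ := by
  have hupd (a : ZMod 2) :
      Function.update (u + z) i (a + z i) = Function.update u i a + z := by
    rw [Function.update_add, Function.update_eq_self]
  obtain hzi | hzi : z i = 0 ∨ z i = 1 := by generalize z i = b; revert b; decide
  · have h0 := hupd 0
    have h1 := hupd 1
    simp only [hzi, add_zero] at h0 h1
    simp [likelihood, hzi, h0, h1, Wi_add_polarEnc]
  · have h0 := hupd 1
    have h1 := hupd 0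
    simp only [hzi, zero_add] at h0 h1
    rw [show (1 + 1 : ZMod 2) = 0 from rfl] at h0
    simp [likelihood, hzi, h0, h1, Wi_add_polarEnc]

def roundBit (l r : ℝ) : ZMod 2 := if r < l / (1 + l) then 0 else 1

theorem roundBit_inv_one_sub {l r : ℝ} (hl : 0 < l) (hr : r ≠ l / (1 + l)) :
    roundBit l⁻¹ (1 - r) = roundBit l r + 1 := by
  have hflip : l⁻¹ / (1 + l⁻¹) = 1 - l / (1 + l) := by field_simp; ring
  unfold roundBit
  simp only [hflip, sub_lt_sub_iff_left]
  rcases lt_or_gt_of_ne hr with h | h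
  · rw [if_neg h.not_gt, if_pos h]; rfl
  · rw [if_pos h, if_neg h.not_gt]; rfl

theorem roundBit_coupled {l r : ℝ} (hl : 0 < l) (hr : r ≠ l / (1 + l)) (b : ZMod 2) :
    roundBit (if b = 0 then l else l⁻¹) (if b = 0 then r else 1 - r) = roundBit l r + b := by
  obtain rfl | rfl : b = 0 ∨ b = 1 := by revert b; decide
  · simp
  · simpa using roundBit_inv_one_sub hl hr

section Encoder

variable {D : ℝ} {n : ℕ} {F : Finset (Fin (2 ^ n))} {ut y : Fin (2 ^ n) → ZMod 2}
  {r : Fin (2 ^ n) → ℝ}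

theorem scEncAux_succ (k : ℕ) (i : Fin (2 ^ n)) :
    scEncAux D n F ut y r (k + 1) i =
      if (i : ℕ) = k then
        if i ∈ F then ut i else roundBit (likelihood D n y i (scEncAux D n F ut y r k)) (r i)
      else scEncAux D n F ut y r k i :=
  rfl

theorem scEncAux_of_lt {k m : ℕ} (hkm : k ≤ m) {i : Fin (2 ^ n)} (hi : (i : ℕ) < k) :
    scEncAux D n F ut y r m i = scEncAux D n F ut y r k i := by
  induction m, hkm using Nat.le_induction with
  | base => rfl
  | succ m hkm ih => rw [scEncAux_succ, if_neg (by omega), ih]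

theorem likelihood_scEnc (i : Fin (2 ^ n)) :
    likelihood D n y i (scEnc D n F ut y r) = likelihood D n y i (scEncAux D n F ut y r i) :=
  likelihood_congr D n y i fun _ hj => scEncAux_of_lt i.isLt.le hj

theorem scEncAux_coupled (hD0 : 0 < D) (hD1 : D < 1) {ut' z : Fin (2 ^ n) → ZMod 2}
    {r' : Fin (2 ^ n) → ℝ} (hut' : ∀ i ∈ F, ut' i = ut i + z i)
    (hr' : ∀ i, r' i = if z i = 0 then r i else 1 - r i)
    (hthr : ∀ i ∉ F,
      r i ≠ likelihood D n y i (scEncAux D n F ut y r i) /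
        (1 + likelihood D n y i (scEncAux D n F ut y r i)))
    (k : ℕ) (i : Fin (2 ^ n)) :
    scEncAux D n F ut' (y + polarEnc n z) r' k i =
      scEncAux D n F ut y r k i + if (i : ℕ) < k then z i else 0 := by
  induction k generalizing i with
  | zero => simp [scEncAux]
  | succ k ih =>
    rw [scEncAux_succ, scEncAux_succ]
    by_cases hik : (i : ℕ) = k
    · subst hik
      have hprefix :
          likelihood D n (y + polarEnc n z) i (scEncAux D n F ut' (y + polarEnc n z) r' i) =
            likelihood D n (y + polarEnc n z) i (scEncAux D n F ut y r i + z) :=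
        likelihood_congr _ _ _ _ fun j hj => by simp [ih, Fin.lt_def.1 hj]
      by_cases hiF : i ∈ F
      · simp [hiF, hut']
      · simp only [hiF, if_false, if_true, lt_add_one, hprefix, likelihood_add_polarEnc, hr']
        exact roundBit_coupled (likelihood_pos hD0 hD1 _ _ _ _) (hthr i hiF) (z i)
    · have hlt : (i : ℕ) < k + 1 ↔ (i : ℕ) < k := by omega
      simp only [hik, if_false, ih, hlt]

end Encoder

/-- **Coupled randomized rounding is equivariant.**  With `z̄ = (ȳ ⊕ ȳ′)Hₙ⁻¹`,
`ũ′_F = ũ_F ⊕ z̄_F` and the coupled randomness `r′_i = r_i` if `z_i = 0`,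
`r′_i = 1 − r_i` if `z_i = 1`, and provided no non-frozen decision hits the rounding
threshold exactly, `g(ũ′_F, ȳ′, r̄′) = g(ũ_F, ȳ, r̄) ⊕ z̄`. -/
theorem scEnc_equivariant (D : ℝ) (hD0 : 0 < D) (hD1 : D < 1) (n : ℕ)
    (F : Finset (Fin (2 ^ n))) (ut y y' ut' z : Fin (2 ^ n) → ZMod 2)
    (r r' : Fin (2 ^ n) → ℝ)
    (hz : z = Matrix.vecMul (y + y') (polarH n)⁻¹)
    (hut' : ∀ i ∈ F, ut' i = ut i + z i)
    (hr' : ∀ i, r' i = if z i = 0 then r i else 1 - r i)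
    (hthr : ∀ i ∉ F,
      r i ≠ likelihood D n y i (scEnc D n F ut y r) /
        (1 + likelihood D n y i (scEnc D n F ut y r))) :
    scEnc D n F ut' y' r' = scEnc D n F ut y r + z := by
  obtain rfl : y' = y + polarEnc n z := by
    rw [polarEnc, hz, Matrix.vecMul_vecMul, Matrix.nonsing_inv_mul _ (isUnit_det_polarH n),
      Matrix.vecMul_one, CharTwo.add_cancel_left]
  simp only [likelihood_scEnc] at hthr
  funext i
  simpa [scEnc, i.isLt] using scEncAux_coupled hD0 hD1 hut' hr' hthr (2 ^ n) i

end
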